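/- arXiv:1811.10528 — 3 statements merged into one kernel-verified Lean document; each statement's English description precedes it below -/
import Mathlib

section
/- The Fourier transform φ : Q(A) → End_{A-A}(A⊗A) intertwines the convolution product on Q(A) with composition: φ(x ∗ y) = φ(x) ∘ φ(y). -/
open CategoryTheory MonoidalCategory

universe v u

structure SeparableAlgebra (C : Type u) [Category.{v} C] [MonoidalCategory C] where
  X : C
  mul : X ⊗ X ⟶ X
  one : 𝟙_ C ⟶ X
  mul_assoc : (mul ▷ X) ≫ mul = (α_ X X X).hom ≫ (X ◁ mul) ≫ mul
  one_mul : (one ▷ X) ≫ mul = (λ_ X).hom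
  mul_one : (X ◁ one) ≫ mul = (ρ_ X).hom
  comul : X ⟶ X ⊗ X
  comul_mul : comul ≫ mul = 𝟙 X
  comul_left : mul ≫ comul = (X ◁ comul) ≫ (α_ X X X).inv ≫ (mul ▷ X)
  comul_right : mul ≫ comul = (comul ▷ X) ≫ (α_ X X X).hom ≫ (X ◁ mul)
  counit : X ⟶ 𝟙_ C
  counit_left : comul ≫ (counit ▷ X) ≫ (λ_ X).hom = 𝟙 X
  counit_right : comul ≫ (X ◁ counit) ≫ (ρ_ X).hom = 𝟙 X

namespace SeparableAlgebra

variable {C : Type u} [Category.{v} C] [MonoidalCategory C] (S : SeparableAlgebra C)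

/-- The categorical trace of an endomorphism of `A`, defined via the Frobenius structure. -/
def trace (f : S.X ⟶ S.X) : 𝟙_ C ⟶ 𝟙_ C :=
  S.one ≫ S.comul ≫ (f ▷ S.X) ≫ S.mul ≫ S.counit

/-- The convolution product on `C(A,A)`. -/
def conv (x y : S.X ⟶ S.X) : S.X ⟶ S.X := S.comul ≫ (x ⊗ₘ y) ≫ S.mul

/-- Commutativity of the algebra with respect to the braiding. -/
def IsCommutative [BraidedCategory C] : Prop := (β_ S.X S.X).hom ≫ S.mul = S.mul

/-- `f : A → A` is an algebra endomorphism. -/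
def IsAlgHom (f : S.X ⟶ S.X) : Prop :=
  S.mul ≫ f = (f ⊗ₘ f) ≫ S.mul ∧ S.one ≫ f = S.one

end SeparableAlgebra

namespace SeparableAlgebra

variable {C : Type u} [Category.{v} C] [MonoidalCategory C] (S : SeparableAlgebra C)

/-- The Fourier transform `φ(x) = (1 ⊗ m) ∘ (1 ⊗ x ⊗ 1) ∘ (Δ ⊗ 1)` on `A ⊗ A`. -/
def fourier (x : S.X ⟶ S.X) : S.X ⊗ S.X ⟶ S.X ⊗ S.X :=
  (S.comul ▷ S.X) ≫ (α_ S.X S.X S.X).hom ≫ (S.X ◁ (x ▷ S.X)) ≫ (S.X ◁ S.mul)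

/-- `f : A ⊗ A → A ⊗ A` is an `A`-bimodule endomorphism for the outer bimodule structure
on `A ⊗ A` (left action on the left factor, right action on the right factor). -/
def IsBimodHom (f : S.X ⊗ S.X ⟶ S.X ⊗ S.X) : Prop :=
  ((S.X ◁ f) ≫ (α_ S.X S.X S.X).inv ≫ (S.mul ▷ S.X)
      = (α_ S.X S.X S.X).inv ≫ (S.mul ▷ S.X) ≫ f) ∧
  ((f ▷ S.X) ≫ (α_ S.X S.X S.X).hom ≫ (S.X ◁ S.mul)
      = (α_ S.X S.X S.X).hom ≫ (S.X ◁ S.mul) ≫ f)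

end SeparableAlgebra

/-!
In Sweedler notation `φ(x)(a ⊗ b) = a₁ ⊗ x(a₂) b`, so `φ(x)(φ(y)(a ⊗ b)) = a₁₁ ⊗ x(a₁₂) y(a₂) b`
while `φ(x ∗ y)(a ⊗ b) = a₁ ⊗ x(a₂₁) y(a₂₂) b` by associativity of `m`. The two agree because `Δ`
is coassociative, which follows from `Δ` being an `A`-bimodule map: writing `Δ(a) = Δ(1) a`,
both `(Δ ⊗ 1) Δ (a)` and `(1 ⊗ Δ) Δ (a)` become `Δ(1)₁ ⊗ Δ(1)₂ a₁ ⊗ a₂`.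
-/

namespace SeparableAlgebra

variable {C : Type u} [Category.{v} C] [MonoidalCategory C] (S : SeparableAlgebra C)

lemma comul_eq_comul_one_mul :
    S.comul = (λ_ S.X).inv ≫ ((S.one ≫ S.comul) ▷ S.X) ≫ (α_ S.X S.X S.X).hom ≫
      (S.X ◁ S.mul) := by
  calc S.comul = (λ_ S.X).inv ≫ ((S.one ▷ S.X) ≫ S.mul) ≫ S.comul := by simp [S.one_mul]
    _ = _ := by simp [S.comul_right]

lemma coassoc :
    S.comul ≫ (S.comul ▷ S.X) ≫ (α_ S.X S.X S.X).hom = S.comul ≫ (S.X ◁ S.comul) := by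
  have h_whiskerRight : S.comul ≫ (S.comul ▷ S.X) ≫ (α_ S.X S.X S.X).hom =
      (λ_ S.X).inv ≫ ((S.one ≫ S.comul) ⊗ₘ S.comul) ≫ (α_ S.X S.X (S.X ⊗ S.X)).hom ≫
        (S.X ◁ ((α_ S.X S.X S.X).inv ≫ (S.mul ▷ S.X))) := by
    nth_rw 2 [comul_eq_comul_one_mul]
    simp only [comp_whiskerRight, leftUnitor_inv_whiskerRight, Category.assoc]
    rw [leftUnitor_inv_naturality_assoc, MonoidalCategory.tensorHom_def']
    monoidal
  have h_whiskerLeft : S.comul ≫ (S.X ◁ S.comul) =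
      (λ_ S.X).inv ≫ ((S.one ≫ S.comul) ⊗ₘ S.comul) ≫ (α_ S.X S.X (S.X ⊗ S.X)).hom ≫
        (S.X ◁ ((α_ S.X S.X S.X).inv ≫ (S.mul ▷ S.X))) := by
    nth_rw 1 [comul_eq_comul_one_mul]
    simp only [Category.assoc, ← whiskerLeft_comp, S.comul_left]
    rw [MonoidalCategory.tensorHom_def]
    monoidal
  exact h_whiskerRight.trans h_whiskerLeft.symm

lemma conv_whiskerRight_mul (x y : S.X ⟶ S.X) :
    (S.conv x y ▷ S.X) ≫ S.mul =
      (S.comul ▷ S.X) ≫ (α_ S.X S.X S.X).hom ≫ (S.X ◁ ((y ▷ S.X) ≫ S.mul)) ≫ (x ▷ S.X) ≫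
        S.mul := by
  simp only [conv, MonoidalCategory.tensorHom_def, comp_whiskerRight, Category.assoc, S.mul_assoc,
    whisker_exchange_assoc]
  monoidal

/-- `a ⊗ b ↦ d₁ ⊗ x(d₂) y(d₃) b`, where `D a = d₁ ⊗ d₂ ⊗ d₃`. -/
def fourier₂ (D : S.X ⟶ S.X ⊗ (S.X ⊗ S.X)) (x y : S.X ⟶ S.X) : S.X ⊗ S.X ⟶ S.X ⊗ S.X :=
  (D ▷ S.X) ≫ (α_ S.X (S.X ⊗ S.X) S.X).hom ≫
    (S.X ◁ ((α_ S.X S.X S.X).hom ≫ (S.X ◁ ((y ▷ S.X) ≫ S.mul)) ≫ (x ▷ S.X) ≫ S.mul))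

lemma fourier_conv_eq_fourier₂ (x y : S.X ⟶ S.X) :
    S.fourier (S.conv x y) = S.fourier₂ (S.comul ≫ (S.X ◁ S.comul)) x y := by
  rw [fourier, ← whiskerLeft_comp, conv_whiskerRight_mul, fourier₂]
  monoidal

lemma fourier_comp_fourier (x y : S.X ⟶ S.X) :
    S.fourier y ≫ S.fourier x =
      S.fourier₂ (S.comul ≫ (S.comul ▷ S.X) ≫ (α_ S.X S.X S.X).hom) x y := by
  simp only [fourier, fourier₂, Category.assoc, ← whiskerLeft_comp]
  rw [whisker_exchange_assoc, associator_naturality_right_assoc]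
  monoidal

end SeparableAlgebra

theorem fourier_conv_general {C : Type u} [Category.{v} C] [MonoidalCategory C]
    (S : SeparableAlgebra C) :
    ∀ x y : S.X ⟶ S.X, S.fourier (S.conv x y) = S.fourier y ≫ S.fourier x := by
  intro x y
  rw [S.fourier_conv_eq_fourier₂, ← S.coassoc, S.fourier_comp_fourier]

/-- The Fourier transform intertwines the convolution product with
composition: `φ(x ∗ y) = φ(x) ∘ φ(y)`. -/
theorem fourier_conv {C : Type u} [Category.{v} C] [MonoidalCategory C]
    [BraidedCategory C] (S : SeparableAlgebra C) :
    ∀ x y : S.X ⟶ S.X, S.fourier (S.conv x y) = S.fourier y ≫ S.fourier x :=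
  fourier_conv_general S
end

section
/- If A is a commutative separable algebra in a braided tensor category C, then the convolution algebra Q(A) is commutative: x ∗ y = y ∗ x for all x, y ∈ C(A,A). -/
/-!
The copairing `Δ ∘ η` and the pairing `ε ∘ m` exhibit `A` as self-dual. Commutativity makes the
pairing symmetric, and since the copairing of an exact pairing is determined by its pairing, the
copairing is symmetric as well. As `Δ = (id ⊗ m) ∘ (Δη ⊗ id)`, this makes `Δ` cocommutative, and
then `x ∗ y = m (x ⊗ y) Δ = m β (x ⊗ y) Δ = m (y ⊗ x) β Δ = y ∗ x` by naturality of the braiding.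
-/

open CategoryTheory MonoidalCategory

universe v u

namespace CategoryTheory

variable {C : Type u} [Category.{v} C] [MonoidalCategory C]

theorem ExactPairing.coevaluation_unique {X Y : C} [ExactPairing X Y] {c : 𝟙_ C ⟶ X ⊗ Y}
    (h : c ▷ X ≫ (α_ X Y X).hom ≫ X ◁ ε_ X Y = (λ_ X).hom ≫ (ρ_ X).inv) :
    c = η_ X Y := by
  apply (tensorRightHomEquiv (𝟙_ C) X Y X).symm.injective
  show c ▷ X ≫ (α_ X Y X).hom ≫ X ◁ ε_ X Y ≫ (ρ_ X).hom =
    η_ X Y ▷ X ≫ (α_ X Y X).hom ≫ X ◁ ε_ X Y ≫ (ρ_ X).hom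
  simp [reassoc_of% h]

variable [BraidedCategory C]

theorem ExactPairing.coevaluation_braiding {X : C} [ExactPairing X X]
    (h : (β_ X X).hom ≫ ε_ X X = ε_ X X) : η_ X X ≫ (β_ X X).hom = η_ X X := by
  have swap := (BraidedCategory.exactPairing_swap X X).evaluation_coevaluation'
  change (η_ X X ≫ (β_ X X).inv) ▷ X ≫ _ ≫ X ◁ ((β_ X X).hom ≫ ε_ X X) = _ at swap
  rw [h] at swap
  rw [← Iso.eq_comp_inv]
  exact (ExactPairing.coevaluation_unique swap).symm

/-- Both sides are `x ↦ g (f₂ ⊗ x) ⊗ f₁`, with the cup `f` placed left resp. right of `x`. -/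
theorem leftUnitor_inv_whiskerRight_whiskerLeft_braiding {A B X Y : C}
    (f : 𝟙_ C ⟶ A ⊗ B) (g : B ⊗ X ⟶ Y) :
    (λ_ X).inv ≫ f ▷ X ≫ (α_ A B X).hom ≫ A ◁ g ≫ (β_ A Y).hom =
      (ρ_ X).inv ≫ X ◁ (f ≫ (β_ A B).hom) ≫ (α_ X B A).inv ≫ ((β_ B X).inv ≫ g) ▷ A := by
  have hρ : (ρ_ X).inv = (λ_ X).inv ≫ (β_ (𝟙_ C) X).hom := by simp [braiding_tensorUnit_left]
  rw [BraidedCategory.braiding_naturality_right, BraidedCategory.braiding_tensor_right_hom, hρ]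
  simp only [Category.assoc]
  rw [← BraidedCategory.braiding_naturality_left_assoc, BraidedCategory.braiding_tensor_left_hom]
  simp

end CategoryTheory

namespace SeparableAlgebra

variable {C : Type u} [Category.{v} C] [MonoidalCategory C] (S : SeparableAlgebra C)

def coev : 𝟙_ C ⟶ S.X ⊗ S.X := S.one ≫ S.comul

def ev : S.X ⊗ S.X ⟶ 𝟙_ C := S.mul ≫ S.counit

theorem comul_eq_coev_whiskerRight :
    S.comul = (λ_ S.X).inv ≫ S.coev ▷ S.X ≫ (α_ S.X S.X S.X).hom ≫ S.X ◁ S.mul := by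
  calc S.comul = ((λ_ S.X).inv ≫ S.one ▷ S.X ≫ S.mul) ≫ S.comul := by simp [S.one_mul]
    _ = _ := by simp [coev, S.comul_right]

theorem comul_eq_whiskerLeft_coev :
    S.comul = (ρ_ S.X).inv ≫ S.X ◁ S.coev ≫ (α_ S.X S.X S.X).inv ≫ S.mul ▷ S.X := by
  calc S.comul = ((ρ_ S.X).inv ≫ S.X ◁ S.one ≫ S.mul) ≫ S.comul := by simp [S.mul_one]
    _ = _ := by simp [coev, S.comul_left]

theorem comul_counit_whiskerRight : S.comul ≫ S.counit ▷ S.X = (λ_ S.X).inv := by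
  simpa using S.counit_left =≫ (λ_ S.X).inv

theorem comul_whiskerLeft_counit : S.comul ≫ S.X ◁ S.counit = (ρ_ S.X).inv := by
  simpa using S.counit_right =≫ (ρ_ S.X).inv

theorem coev_ev :
    S.X ◁ S.coev ≫ (α_ S.X S.X S.X).inv ≫ S.ev ▷ S.X = (ρ_ S.X).hom ≫ (λ_ S.X).inv := by
  have h : S.X ◁ S.coev ≫ (α_ S.X S.X S.X).inv ≫ S.mul ▷ S.X = (ρ_ S.X).hom ≫ S.comul := by
    simp [comul_eq_whiskerLeft_coev]
  rw [ev, comp_whiskerRight, reassoc_of% h, comul_counit_whiskerRight]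

theorem ev_coev :
    S.coev ▷ S.X ≫ (α_ S.X S.X S.X).hom ≫ S.X ◁ S.ev = (λ_ S.X).hom ≫ (ρ_ S.X).inv := by
  have h : S.coev ▷ S.X ≫ (α_ S.X S.X S.X).hom ≫ S.X ◁ S.mul = (λ_ S.X).hom ≫ S.comul := by
    simp [comul_eq_coev_whiskerRight]
  rw [ev, whiskerLeft_comp, reassoc_of% h, comul_whiskerLeft_counit]

abbrev exactPairing : ExactPairing S.X S.X := ⟨S.coev, S.ev, S.coev_ev, S.ev_coev⟩

variable [BraidedCategory C] {S}

theorem braiding_ev (hcomm : S.IsCommutative) : (β_ S.X S.X).hom ≫ S.ev = S.ev := by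
  rw [ev, ← Category.assoc, hcomm]

theorem coev_braiding (hcomm : S.IsCommutative) : S.coev ≫ (β_ S.X S.X).hom = S.coev :=
  letI := S.exactPairing
  ExactPairing.coevaluation_braiding (S.braiding_ev hcomm)

theorem comul_braiding (hcomm : S.IsCommutative) : S.comul ≫ (β_ S.X S.X).hom = S.comul := by
  have hinv : (β_ S.X S.X).inv ≫ S.mul = S.mul := by rw [Iso.inv_comp_eq, hcomm]
  conv_lhs => rw [comul_eq_coev_whiskerRight]
  simp only [Category.assoc, leftUnitor_inv_whiskerRight_whiskerLeft_braiding, coev_braiding hcomm,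
    hinv]
  exact S.comul_eq_whiskerLeft_coev.symm

end SeparableAlgebra

/-- If `A` is a commutative separable algebra in a braided tensor category,
then the convolution algebra `Q(A)` is commutative. -/
theorem conv_comm {C : Type u} [Category.{v} C] [MonoidalCategory C]
    [BraidedCategory C] (S : SeparableAlgebra C)
    (hcomm : S.IsCommutative) :
    ∀ x y : S.X ⟶ S.X, S.conv x y = S.conv y x := by
  intro x y
  calc S.conv x y = S.comul ≫ (x ⊗ₘ y) ≫ (β_ S.X S.X).hom ≫ S.mul := by rw [hcomm]; rfl
    _ = (S.comul ≫ (β_ S.X S.X).hom) ≫ (y ⊗ₘ x) ≫ S.mul := by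
      rw [BraidedCategory.braiding_naturality_assoc, Category.assoc]
    _ = S.conv y x := by rw [SeparableAlgebra.comul_braiding hcomm]; rfl
end

section
/- The assignment g ↦ χ_g, sending an algebra automorphism g of an étale algebra A to the character χ_g(x) = tr_A(g ∘ x)·d(A)^{-1} of the convolution algebra, is injective on Aut_alg(A), and distinct automorphisms correspond to orthogonal minimal idempotents of Q(A): g ∗ h = 0 when g ≠ h are automorphisms with g∗h computed in convolution, unless g = h in which case g ∗ g = g. -/
open CategoryTheory MonoidalCategory

universe v u

/-!
For an algebra endomorphism `v` of `A`, the convolution `E = v ∗ 1` is a right `A`-module map,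
hence left multiplication by its point `p = η ≫ E`; by commutativity it is also right
multiplication by `p`, and multiplicativity of `v` gives `v ≫ E = E`. Connectedness writes
`p = c • η`, and comparing `tr E = c d` with `tr (v ≫ E) = c² d` forces `c ∈ {0, 1}`: `c = 1`
makes `E = 1` and so `v = 1`, while `c = 0` makes `E = 0`. For automorphisms `g ≠ h` this gives
`g ∗ h = ((g ≫ h⁻¹) ∗ 1) ≫ h = 0` and `tr (h⁻¹ ≫ g) = 0 ≠ d = tr (h⁻¹ ≫ h)`, which separates the
characters; `g ∗ g = (Δ ≫ m) ≫ g = g`.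
-/

theorem eq_of_smul_id_eq {k : Type*} [Semiring k] {C : Type u} [Category.{v} C] [Preadditive C]
    [Linear k C] {Y : C} (hY : ∀ u : Y ⟶ Y, ∃! c : k, u = c • 𝟙 Y) {a b : k}
    (hab : a • 𝟙 Y = b • 𝟙 Y) : a = b :=
  let ⟨_, _, huniq⟩ := hY (a • 𝟙 Y)
  (huniq a rfl).trans (huniq b hab).symm

theorem comp_rightUnitor_inv_whiskerLeft {C : Type u} [Category.{v} C] [MonoidalCategory C]
    {X Y : C} (f : 𝟙_ C ⟶ X) (g : 𝟙_ C ⟶ Y) :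
    f ≫ (ρ_ X).inv ≫ X ◁ g = g ≫ (λ_ Y).inv ≫ f ▷ Y := by
  rw [rightUnitor_inv_naturality_assoc, ← whisker_exchange, id_whiskerLeft, ← unitors_inv_equal]
  simp

namespace SeparableAlgebra

variable {C : Type u} [Category.{v} C] [MonoidalCategory C] (S : SeparableAlgebra C)

def leftMul (q : 𝟙_ C ⟶ S.X) : S.X ⟶ S.X := (λ_ S.X).inv ≫ q ▷ S.X ≫ S.mul

def rightMul (q : 𝟙_ C ⟶ S.X) : S.X ⟶ S.X := (ρ_ S.X).inv ≫ S.X ◁ q ≫ S.mul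

theorem leftMul_one : S.leftMul S.one = 𝟙 S.X := by
  simp [leftMul, S.one_mul]

theorem one_comp_rightMul (q : 𝟙_ C ⟶ S.X) : S.one ≫ S.rightMul q = q := by
  rw [rightMul, reassoc_of% comp_rightUnitor_inv_whiskerLeft, S.one_mul, Iso.inv_hom_id,
    Category.comp_id]

theorem rightMul_comp_comul (q : 𝟙_ C ⟶ S.X) :
    S.rightMul q ≫ S.comul = S.comul ≫ S.X ◁ S.rightMul q := by
  simp only [rightMul, Category.assoc, S.comul_right, MonoidalCategory.whiskerLeft_comp]
  rw [whisker_exchange_assoc, associator_naturality_right_assoc, ← rightUnitor_inv_naturality_assoc,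
    rightUnitor_tensor_inv, Category.assoc, Iso.inv_hom_id_assoc]

theorem rightMul_eq_leftMul [BraidedCategory C] (hcomm : S.IsCommutative) (q : 𝟙_ C ⟶ S.X) :
    S.rightMul q = S.leftMul q := by
  rw [rightMul, leftMul]
  conv_lhs => rw [← hcomm]
  rw [BraidedCategory.braiding_naturality_right_assoc,
    ← Category.assoc, rightUnitor_inv_braiding]

/-- Whiskering is not assumed to preserve `0`, so `rightMul 0 = 0` is not automatic; it is read
off from names, on which right multiplications act by composition alone (`name_rightMul`). -/
def name (z : S.X ⟶ S.X) : 𝟙_ C ⟶ S.X ⊗ S.X := (S.one ≫ S.comul) ≫ S.X ◁ z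

theorem snake :
    (ρ_ S.X).inv ≫ S.X ◁ (S.one ≫ S.comul) ≫ (α_ S.X S.X S.X).inv ≫
      S.mul ▷ S.X ≫ S.counit ▷ S.X ≫ (λ_ S.X).hom = 𝟙 S.X := by
  rw [MonoidalCategory.whiskerLeft_comp_assoc, reassoc_of% S.comul_left.symm,
    reassoc_of% S.mul_one, S.counit_left, Category.comp_id, Iso.inv_hom_id]

theorem name_injective : Function.Injective S.name := by
  have reconstruct : ∀ z, (ρ_ S.X).inv ≫ S.X ◁ S.name z ≫ (α_ S.X S.X S.X).inv ≫
      S.mul ▷ S.X ≫ S.counit ▷ S.X ≫ (λ_ S.X).hom = z := by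
    intro z
    conv_rhs => rw [← Category.id_comp z, ← S.snake]
    simp only [name, MonoidalCategory.whiskerLeft_comp, Category.assoc, leftUnitor_naturality,
      whisker_exchange_assoc, associator_inv_naturality_right_assoc]
  intro a b hab
  rw [← reconstruct a, hab, reconstruct]

theorem name_rightMul (q : 𝟙_ C ⟶ S.X) : S.name (S.rightMul q) = q ≫ S.comul := by
  rw [name, Category.assoc, ← rightMul_comp_comul, reassoc_of% one_comp_rightMul]

theorem name_zero [Preadditive C] : S.name 0 = 0 := by
  have hcounit : S.comul ≫ S.X ◁ S.counit = (ρ_ S.X).inv := by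
    rw [← cancel_mono (ρ_ S.X).hom, Category.assoc, S.counit_right, Iso.inv_hom_id]
  rw [name, ← Limits.comp_zero (f := S.counit) (Z := S.X),
    MonoidalCategory.whiskerLeft_comp, Category.assoc, reassoc_of% hcounit,
    comp_rightUnitor_inv_whiskerLeft, Limits.zero_comp]

theorem rightMul_zero [Preadditive C] : S.rightMul 0 = 0 :=
  S.name_injective (by rw [name_rightMul, Limits.zero_comp, name_zero])

theorem conv_id_right (x : S.X ⟶ S.X) : S.conv x (𝟙 S.X) = S.comul ≫ x ▷ S.X ≫ S.mul := by
  rw [conv, tensorHom_id]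

theorem conv_id_id : S.conv (𝟙 S.X) (𝟙 S.X) = 𝟙 S.X := by
  rw [conv_id_right, id_whiskerRight, Category.id_comp, S.comul_mul]

theorem conv_comp_comp {h : S.X ⟶ S.X} (hh : S.mul ≫ h = (h ⊗ₘ h) ≫ S.mul) (x y : S.X ⟶ S.X) :
    S.conv (x ≫ h) (y ≫ h) = S.conv x y ≫ h := by
  rw [conv, conv, ← tensorHom_comp_tensorHom, Category.assoc, Category.assoc, Category.assoc, hh]

theorem trace_eq (x : S.X ⟶ S.X) : S.trace x = S.one ≫ S.conv x (𝟙 S.X) ≫ S.counit := by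
  simp only [trace, conv_id_right, Category.assoc]

theorem mul_comp_conv_id_right (x : S.X ⟶ S.X) :
    S.mul ≫ S.conv x (𝟙 S.X) = S.conv x (𝟙 S.X) ▷ S.X ≫ S.mul := by
  simp only [conv_id_right, reassoc_of% S.comul_right, comp_whiskerRight, Category.assoc]
  rw [whisker_exchange_assoc, ← associator_naturality_left_assoc, ← S.mul_assoc]

theorem eq_leftMul_of_mul_comp {z : S.X ⟶ S.X} (hz : S.mul ≫ z = z ▷ S.X ≫ S.mul) :
    z = S.leftMul (S.one ≫ z) := by
  rw [leftMul, comp_whiskerRight, Category.assoc, ← hz, reassoc_of% S.one_mul, Iso.inv_hom_id_assoc]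

theorem conv_comp_id_right {z : S.X ⟶ S.X} (hz : S.mul ≫ z = z ▷ S.X ≫ S.mul) (x : S.X ⟶ S.X) :
    S.conv (x ≫ z) (𝟙 S.X) = S.conv x (𝟙 S.X) ≫ z := by
  simp only [conv_id_right, comp_whiskerRight, Category.assoc, hz]

theorem mul_comp_conv_id_right_of_mul {v : S.X ⟶ S.X} (hv : S.mul ≫ v = (v ⊗ₘ v) ≫ S.mul) :
    S.mul ≫ S.conv v (𝟙 S.X) = v ▷ S.X ≫ S.X ◁ S.conv v (𝟙 S.X) ≫ S.mul := by
  simp only [conv_id_right, reassoc_of% S.comul_left, ← comp_whiskerRight_assoc, hv]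
  rw [comp_whiskerRight_assoc, S.mul_assoc, MonoidalCategory.tensorHom_def, comp_whiskerRight_assoc,
    associator_naturality_middle_assoc, ← associator_inv_naturality_left_assoc,
    Iso.inv_hom_id_assoc]
  simp only [MonoidalCategory.whiskerLeft_comp, Category.assoc, whisker_exchange_assoc]

theorem conv_id_right_eq_comp_rightMul {v : S.X ⟶ S.X} (hv : S.mul ≫ v = (v ⊗ₘ v) ≫ S.mul) :
    S.conv v (𝟙 S.X) = v ≫ S.rightMul (S.one ≫ S.conv v (𝟙 S.X)) := by
  calc S.conv v (𝟙 S.X) = ((ρ_ S.X).inv ≫ S.X ◁ S.one ≫ S.mul) ≫ S.conv v (𝟙 S.X) := by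
        rw [S.mul_one, Iso.inv_hom_id, Category.id_comp]
    _ = v ≫ S.rightMul (S.one ≫ S.conv v (𝟙 S.X)) := by
        rw [Category.assoc, Category.assoc, S.mul_comp_conv_id_right_of_mul hv,
          whisker_exchange_assoc, ← rightUnitor_inv_naturality_assoc]
        simp only [rightMul, MonoidalCategory.whiskerLeft_comp, Category.assoc]

theorem comp_conv_id_right [BraidedCategory C] (hcomm : S.IsCommutative) {v : S.X ⟶ S.X}
    (hv : S.mul ≫ v = (v ⊗ₘ v) ≫ S.mul) : v ≫ S.conv v (𝟙 S.X) = S.conv v (𝟙 S.X) := by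
  conv_rhs => rw [S.conv_id_right_eq_comp_rightMul hv, S.rightMul_eq_leftMul hcomm,
    ← S.eq_leftMul_of_mul_comp (S.mul_comp_conv_id_right v)]

variable {S}

theorem IsAlgHom.comp {a b : S.X ⟶ S.X} (ha : S.IsAlgHom a) (hb : S.IsAlgHom b) :
    S.IsAlgHom (a ≫ b) :=
  ⟨by rw [reassoc_of% ha.1, hb.1, tensorHom_comp_tensorHom_assoc], by rw [reassoc_of% ha.2, hb.2]⟩

theorem IsAlgHom.inv {a : S.X ⟶ S.X} [IsIso a] (ha : S.IsAlgHom a) : S.IsAlgHom (inv a) :=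
  ⟨by rw [IsIso.comp_inv_eq, Category.assoc, ha.1, tensorHom_comp_tensorHom_assoc]; simp,
    by rw [IsIso.comp_inv_eq, ha.2]⟩

variable (S)

section Linear

variable {k : Type*} [Field k] [Preadditive C] [Linear k C] [BraidedCategory C]

theorem conv_id_right_eq_zero_or_id (hcomm : S.IsCommutative)
    (hconn : ∀ f : 𝟙_ C ⟶ S.X, ∃ c : k, f = c • S.one)
    (hsimple : ∀ u : 𝟙_ C ⟶ 𝟙_ C, ∃! c : k, u = c • 𝟙 (𝟙_ C))
    {d : k} (hd : S.trace (𝟙 S.X) = d • 𝟙 (𝟙_ C)) (hd0 : d ≠ 0)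
    {v : S.X ⟶ S.X} (hv : S.mul ≫ v = (v ⊗ₘ v) ≫ S.mul) :
    S.conv v (𝟙 S.X) = 0 ∨ S.conv v (𝟙 S.X) = 𝟙 S.X := by
  set E := S.conv v (𝟙 S.X)
  have hmod : S.mul ≫ E = E ▷ S.X ≫ S.mul := S.mul_comp_conv_id_right v
  obtain ⟨c, hc⟩ := hconn (S.one ≫ E)
  have hunit : S.one ≫ S.counit = d • 𝟙 (𝟙_ C) := by
    rw [← hd, trace_eq, conv_id_id, Category.id_comp]
  have htrace : S.trace E = (c * d) • 𝟙 (𝟙_ C) := by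
    have hE : S.conv E (𝟙 S.X) = E := by
      simpa only [Category.id_comp, conv_id_id] using S.conv_comp_id_right hmod (𝟙 S.X)
    rw [trace_eq, hE, reassoc_of% hc, Linear.smul_comp, hunit, smul_smul]
  have htrace_comp : S.trace (v ≫ E) = (c * c * d) • 𝟙 (𝟙_ C) := by
    rw [trace_eq, S.conv_comp_id_right hmod, Category.assoc]
    change S.one ≫ E ≫ E ≫ S.counit = _
    rw [reassoc_of% hc, Linear.smul_comp, reassoc_of% hc, Linear.smul_comp, hunit, smul_smul,
      smul_smul]
  rw [S.comp_conv_id_right hcomm hv, htrace] at htrace_comp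
  have hcc : c * (c - 1) = 0 := by
    have hcd : c * d = c * c * d := eq_of_smul_id_eq hsimple htrace_comp
    have : c * (c - 1) * d = 0 := by linear_combination -hcd
    simpa [hd0] using this
  rcases mul_eq_zero.mp hcc with hc0 | hc1
  · left
    rw [S.eq_leftMul_of_mul_comp hmod, ← S.rightMul_eq_leftMul hcomm, hc, hc0, zero_smul,
      rightMul_zero]
  · right
    rw [S.eq_leftMul_of_mul_comp hmod, hc, sub_eq_zero.mp hc1, one_smul, leftMul_one]

theorem conv_id_right_eq_zero (hcomm : S.IsCommutative)
    (hconn : ∀ f : 𝟙_ C ⟶ S.X, ∃ c : k, f = c • S.one)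
    (hsimple : ∀ u : 𝟙_ C ⟶ 𝟙_ C, ∃! c : k, u = c • 𝟙 (𝟙_ C))
    {d : k} (hd : S.trace (𝟙 S.X) = d • 𝟙 (𝟙_ C)) (hd0 : d ≠ 0)
    {v : S.X ⟶ S.X} (hv : S.mul ≫ v = (v ⊗ₘ v) ≫ S.mul) (hne : v ≠ 𝟙 S.X) :
    S.conv v (𝟙 S.X) = 0 :=
  (S.conv_id_right_eq_zero_or_id hcomm hconn hsimple hd hd0 hv).resolve_right fun hE =>
    hne (by simpa [hE] using S.comp_conv_id_right hcomm hv)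

end Linear

end SeparableAlgebra

theorem automorphisms_orthogonal_idempotents_general {k : Type*} [Field k]
    {C : Type u} [Category.{v} C] [MonoidalCategory C] [BraidedCategory C]
    [Preadditive C] [CategoryTheory.Linear k C]
    (S : SeparableAlgebra C)
    (hcommA : S.IsCommutative)
    (hconn : ∀ f : 𝟙_ C ⟶ S.X, ∃ c : k, f = c • S.one)
    (hsimple : ∀ u : 𝟙_ C ⟶ 𝟙_ C, ∃! c : k, u = c • 𝟙 (𝟙_ C))
    (d : k) (hd : S.trace (𝟙 S.X) = d • 𝟙 (𝟙_ C)) (hd0 : d ≠ 0)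
    -- two algebra automorphisms `g`, `h`
    (g h : S.X ⟶ S.X) (hg : S.IsAlgHom g)
    (hh : S.IsAlgHom h) (hhiso : IsIso h)
    -- their characters `χ_g`, `χ_h`
    (χg χh : (S.X ⟶ S.X) → k)
    (hχg : ∀ x : S.X ⟶ S.X, S.trace (x ≫ g) = (χg x * d) • 𝟙 (𝟙_ C))
    (hχh : ∀ x : S.X ⟶ S.X, S.trace (x ≫ h) = (χh x * d) • 𝟙 (𝟙_ C)) :
    -- distinct automorphisms have distinct characters …
    (g ≠ h → χg ≠ χh) ∧
    -- … and are orthogonal idempotents for the convolution product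
    (g ≠ h → S.conv g h = 0) ∧
    S.conv g g = g := by
  have hvanish : ∀ v, S.IsAlgHom v → v ≠ 𝟙 S.X → S.conv v (𝟙 S.X) = 0 := fun _ hv =>
    S.conv_id_right_eq_zero hcommA hconn hsimple hd hd0 hv.1
  refine ⟨fun hne hχ => ?_, fun hne => ?_, ?_⟩
  · have hχg0 : χg (inv h) * d = 0 := by
      refine eq_of_smul_id_eq hsimple ?_
      rw [← hχg, S.trace_eq, hvanish _ (hh.inv.comp hg) (by rwa [Ne, IsIso.inv_comp_eq,
        Category.comp_id]), Limits.zero_comp, Limits.comp_zero, zero_smul]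
    have hχh1 : χh (inv h) * d = 1 * d :=
      eq_of_smul_id_eq hsimple (by rw [← hχh, IsIso.inv_hom_id, hd, one_mul])
    rw [hχ, mul_right_cancel₀ hd0 hχh1, one_mul] at hχg0
    exact hd0 hχg0
  · calc S.conv g h = S.conv ((g ≫ inv h) ≫ h) (𝟙 S.X ≫ h) := by simp
      _ = S.conv (g ≫ inv h) (𝟙 S.X) ≫ h := S.conv_comp_comp hh.1 _ _
      _ = 0 := by
        rw [hvanish _ (hg.comp hh.inv) (by rwa [Ne, IsIso.comp_inv_eq, Category.id_comp]),
          Limits.zero_comp]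
  · simpa [S.conv_id_id] using S.conv_comp_comp hg.1 (𝟙 S.X) (𝟙 S.X)

/-- The assignment `g ↦ χ_g`, `χ_g(x) = tr_A(g ∘ x) · d(A)⁻¹`, is injective
on algebra automorphisms of an étale algebra `A`, and distinct automorphisms are orthogonal
minimal idempotents of `Q(A)`: `g ∗ h = 0` for `g ≠ h`, while `g ∗ g = g`. -/
theorem automorphisms_orthogonal_idempotents {k : Type*} [Field k]
    {C : Type u} [Category.{v} C] [MonoidalCategory C] [BraidedCategory C]
    [Preadditive C] [CategoryTheory.Linear k C]
    (S : SeparableAlgebra C)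
    (hcommA : S.IsCommutative)
    (hconn : ∀ f : 𝟙_ C ⟶ S.X, ∃ c : k, f = c • S.one)
    (hsimple : ∀ u : 𝟙_ C ⟶ 𝟙_ C, ∃! c : k, u = c • 𝟙 (𝟙_ C))
    (d : k) (hd : S.trace (𝟙 S.X) = d • 𝟙 (𝟙_ C)) (hd0 : d ≠ 0)
    -- two algebra automorphisms `g`, `h`
    (g h : S.X ⟶ S.X) (hg : S.IsAlgHom g) (hgiso : IsIso g)
    (hh : S.IsAlgHom h) (hhiso : IsIso h)
    -- their characters `χ_g`, `χ_h`
    (χg χh : (S.X ⟶ S.X) → k)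
    (hχg : ∀ x : S.X ⟶ S.X, S.trace (x ≫ g) = (χg x * d) • 𝟙 (𝟙_ C))
    (hχh : ∀ x : S.X ⟶ S.X, S.trace (x ≫ h) = (χh x * d) • 𝟙 (𝟙_ C)) :
    -- distinct automorphisms have distinct characters …
    (g ≠ h → χg ≠ χh) ∧
    -- … and are orthogonal idempotents for the convolution product
    (g ≠ h → S.conv g h = 0) ∧
    S.conv g g = g :=
  automorphisms_orthogonal_idempotents_general S hcommA hconn hsimple d hd hd0 g h hg hh hhiso χg χh
    hχg hχh
end
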